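/- arXiv:2206.06946 — 4 statements merged into one kernel-verified Lean document; each statement's English description precedes it below -/
import Mathlib

section
/- If x ∈ ∂Ĥ^{2,n} and y ∈ Ĥ^{2,n}, then x and y are joined by a spacelike geodesic inside Ĥ^{2,n} ∪ ∂Ĥ^{2,n} if and only if ⟨x,y⟩ < 0, and by a lightlike geodesic if and only if ⟨x,y⟩ = 0. -/
/-- The signature `(2, n+1)` bilinear form on `ℝ^{n+3}`. -/
noncomputable def bform (n : ℕ) (x y : Fin (n + 3) → ℝ) : ℝ :=
  ∑ i : Fin (n + 3), (if (i : ℕ) < 2 then (1 : ℝ) else -1) * (x i * y i)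

/-- The boundary point `x` (an isotropic ray) and the hyperboloid point `y` are joined by a
spacelike geodesic inside `Ĥ^{2,n} ∪ ∂Ĥ^{2,n}`: `x` is (a positive multiple of) the endpoint
at infinity `y + v` of the spacelike geodesic ray `t ↦ cosh(t)y + sinh(t)v` from `y`. -/
def JoinedSpacelikeInfty (n : ℕ) (x y : Fin (n + 3) → ℝ) : Prop :=
  ∃ v : Fin (n + 3) → ℝ, bform n v v = 1 ∧ bform n y v = 0 ∧
    ∃ s : ℝ, 0 < s ∧ x = s • (y + v)

/-- The boundary point `x` and the hyperboloid point `y` are joined by a lightlike geodesic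
inside `Ĥ^{2,n} ∪ ∂Ĥ^{2,n}`: `x` is (a positive multiple of) the endpoint at infinity `v`
of the lightlike geodesic ray `t ↦ y + tv` from `y`. -/
def JoinedLightlikeInfty (n : ℕ) (x y : Fin (n + 3) → ℝ) : Prop :=
  ∃ v : Fin (n + 3) → ℝ, bform n v v = 0 ∧ bform n y v = 0 ∧ v ≠ 0 ∧
    ∃ s : ℝ, 0 < s ∧ x = s • v

/-!
The endpoint of the spacelike ray from `y` in the unit direction `v ⊥ y` is the isotropic
vector `y + v`, and `⟨y + v, y⟩ = ⟨y, y⟩ = -1`. Conversely, if `⟨x, y⟩ = c < 0`, then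
`v = x / (-c) - y` is a unit vector orthogonal to `y` with `x = (-c)(y + v)`. A lightlike ray from
`y` ends at its own direction, so `x` is such an endpoint exactly when `x ⊥ y`.
-/

namespace LinearMap.BilinForm.IsSymm

variable {V : Type*} [AddCommGroup V] [Module ℝ V] {B : LinearMap.BilinForm ℝ V} {x y : V}

theorem exists_spacelike_endpoint_iff (hB : B.IsSymm) (hxx : B x x = 0) (hyy : B y y = -1) :
    (∃ v, B v v = 1 ∧ B y v = 0 ∧ ∃ s : ℝ, 0 < s ∧ x = s • (y + v)) ↔ B x y < 0 := by
  constructor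
  · rintro ⟨v, -, hyv, s, hs, rfl⟩
    rw [BilinForm.smul_left, BilinForm.add_left, hyy, hB.eq v y, hyv]
    linarith
  · intro hxy
    set c := B x y
    have hc : c ≠ 0 := hxy.ne
    have hyx : B y x = c := hB.eq y x
    refine ⟨(-c)⁻¹ • x - y, ?_, ?_, -c, neg_pos.mpr hxy, ?_⟩
    · simp only [BilinForm.sub_left, BilinForm.sub_right, BilinForm.smul_left,
        BilinForm.smul_right, hxx, hyy, hyx]
      field_simp
      ring
    · simp only [BilinForm.sub_right, BilinForm.smul_right, hyy, hyx]
      field_simp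
      ring
    · rw [add_sub_cancel, smul_smul, mul_inv_cancel₀ (neg_ne_zero.mpr hc), one_smul]

theorem exists_lightlike_endpoint_iff (hB : B.IsSymm) (hxx : B x x = 0) (hx : x ≠ 0) :
    (∃ v, B v v = 0 ∧ B y v = 0 ∧ v ≠ 0 ∧ ∃ s : ℝ, 0 < s ∧ x = s • v) ↔ B x y = 0 := by
  constructor
  · rintro ⟨v, -, hyv, -, s, -, rfl⟩
    rw [BilinForm.smul_left, hB.eq v y, hyv, mul_zero]
  · intro hxy
    exact ⟨x, hxx, (hB.eq y x).trans hxy, hx, 1, one_pos, (one_smul ℝ x).symm⟩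

end LinearMap.BilinForm.IsSymm

noncomputable def bformBilin (n : ℕ) : LinearMap.BilinForm ℝ (Fin (n + 3) → ℝ) :=
  LinearMap.mk₂ ℝ (bform n)
    (fun x y z => by simp only [bform, ← Finset.sum_add_distrib, Pi.add_apply]; congr! 1; ring)
    (fun c x y => by simp only [bform, Finset.mul_sum, Pi.smul_apply, smul_eq_mul]; congr! 1; ring)
    (fun x y z => by simp only [bform, ← Finset.sum_add_distrib, Pi.add_apply]; congr! 1; ring)
    (fun c x y => by simp only [bform, Finset.mul_sum, Pi.smul_apply, smul_eq_mul]; congr! 1; ring)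

theorem bformBilin_isSymm (n : ℕ) : (bformBilin n).IsSymm :=
  ⟨fun x y => by simp only [bformBilin, LinearMap.mk₂_apply, bform, mul_comm (x _)]⟩

/-- If `x ∈ ∂Ĥ^{2,n}` and `y ∈ Ĥ^{2,n}`, then `x` and `y` are joined by a spacelike geodesic
inside `Ĥ^{2,n} ∪ ∂Ĥ^{2,n}` iff `⟨x,y⟩ < 0`, and by a lightlike geodesic iff `⟨x,y⟩ = 0`. -/
theorem stmt1 (n : ℕ) (x y : Fin (n + 3) → ℝ)
    (hx0 : bform n x x = 0) (hxne : x ≠ 0) (hy : bform n y y = -1) :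
    (JoinedSpacelikeInfty n x y ↔ bform n x y < 0) ∧
    (JoinedLightlikeInfty n x y ↔ bform n x y = 0) :=
  ⟨(bformBilin_isSymm n).exists_spacelike_endpoint_iff hx0 hy,
    (bformBilin_isSymm n).exists_lightlike_endpoint_iff hx0 hxne⟩
end

section
/- In the Poincaré model Ψ: 𝔻² × 𝕊ⁿ → Ĥ^{2,n}, two points x = Ψ(u,v) and x' = Ψ(u',v') of Ĥ^{2,n} are joined by a spacelike geodesic if and only if d_{𝕊ⁿ}(v,v') < d_{𝕊²}(u,u'), where d_{𝕊²} is the hemispherical distance on 𝔻² (induced by the metric (2/(1+‖u‖²))²|du|²) and d_{𝕊ⁿ} is the round metric on 𝕊ⁿ. -/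
/-- The Poincaré model map `Ψ(u,v) = (2/(1-‖u‖²))u + ((1+‖u‖²)/(1-‖u‖²))v`. -/
noncomputable def Psi (n : ℕ) (p : (Fin (n + 3) → ℝ) × (Fin (n + 3) → ℝ)) :
    Fin (n + 3) → ℝ :=
  (2 / (1 - bform n p.1 p.1)) • p.1 + ((1 + bform n p.1 p.1) / (1 - bform n p.1 p.1)) • p.2

/-- `x` and `y` are joined by a spacelike geodesic of `Ĥ^{2,n}`. -/
def JoinedSpacelike (n : ℕ) (x y : Fin (n + 3) → ℝ) : Prop :=
  ∃ v : Fin (n + 3) → ℝ, bform n v v = 1 ∧ bform n x v = 0 ∧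
    ∃ t : ℝ, y = Real.cosh t • x + Real.sinh t • v

/-- The round distance on `𝕊ⁿ ⊂ E^⊥`: `cos (d(v,v')) = -⟨v,v'⟩`. -/
noncomputable def sphDist (n : ℕ) (v v' : Fin (n + 3) → ℝ) : ℝ :=
  Real.arccos (-(bform n v v'))

/-- The hemispherical distance on `𝔻²` (for the metric `(2/(1+‖u‖²))²|du|²`):
`cos (d(u,u')) = (2/(1+‖u‖²))(2/(1+‖u'‖²))⟨u,u'⟩ + ((1-‖u‖²)/(1+‖u‖²))((1-‖u'‖²)/(1+‖u'‖²))`. -/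
noncomputable def hemiDist (n : ℕ) (u u' : Fin (n + 3) → ℝ) : ℝ :=
  Real.arccos ((2 / (1 + bform n u u)) * (2 / (1 + bform n u' u')) * bform n u u' +
    ((1 - bform n u u) / (1 + bform n u u)) * ((1 - bform n u' u') / (1 + bform n u' u')))

/-!
Write `x = Ψ(u,v)`, `x' = Ψ(u',v')`, `q = ⟨u,u⟩`, `q' = ⟨u',u'⟩`. Since `E ⟂ E^⊥`,
`⟨x,x'⟩ + 1 = (1+q)(1+q') / ((1-q)(1-q')) · (cos d_{𝕊²}(u,u') - cos d_{𝕊ⁿ}(v,v'))`,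
so the criterion `⟨x,x'⟩ < -1` for a spacelike geodesic (valid as `x ≠ x'`, `Ψ` being injective
by the splitting `E ⊕ E^⊥`) compares the two cosines, and `arccos` reverses the comparison.
Both cosines lie in `[-1,1]` by Cauchy–Schwarz: on `E` the form is positive, and on `E^⊥` it is
nonpositive, since for `w ⟂ E` with `⟨w,w⟩ > 0` the 3-space `E ⊕ ℝw` would be nonnegative, yet it
meets the negative definite span of the last `n+1` coordinates.
-/

open Module Submodule Set

section

variable {n : ℕ}

section Bilinear

lemma bform_comm (x y : Fin (n + 3) → ℝ) : bform n x y = bform n y x := by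
  simp only [bform, mul_comm (x _)]

lemma bform_add_left (x y z : Fin (n + 3) → ℝ) :
    bform n (x + y) z = bform n x z + bform n y z := by
  simp only [bform, Pi.add_apply, add_mul, mul_add, Finset.sum_add_distrib]

lemma bform_sub_left (x y z : Fin (n + 3) → ℝ) :
    bform n (x - y) z = bform n x z - bform n y z := by
  simp only [bform, Pi.sub_apply, sub_mul, mul_sub, Finset.sum_sub_distrib]

lemma bform_smul_left (c : ℝ) (x z : Fin (n + 3) → ℝ) :
    bform n (c • x) z = c * bform n x z := by
  simp only [bform, Pi.smul_apply, smul_eq_mul, Finset.mul_sum]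
  exact Finset.sum_congr rfl fun _ _ => by ring

lemma bform_add_right (x y z : Fin (n + 3) → ℝ) :
    bform n x (y + z) = bform n x y + bform n x z := by
  rw [bform_comm, bform_add_left, bform_comm y, bform_comm z]

lemma bform_sub_right (x y z : Fin (n + 3) → ℝ) :
    bform n x (y - z) = bform n x y - bform n x z := by
  rw [bform_comm, bform_sub_left, bform_comm y, bform_comm z]

lemma bform_smul_right (c : ℝ) (x z : Fin (n + 3) → ℝ) :
    bform n x (c • z) = c * bform n x z := by
  rw [bform_comm, bform_smul_left, bform_comm z]

lemma bform_add_smul_self (x y : Fin (n + 3) → ℝ) (t : ℝ) :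
    bform n (x + t • y) (x + t • y) =
      bform n y y * (t * t) + 2 * bform n x y * t + bform n x x := by
  simp only [bform_add_left, bform_add_right, bform_smul_left, bform_smul_right, bform_comm y x]
  ring

end Bilinear

section CauchySchwarz

variable {x y : Fin (n + 3) → ℝ}

lemma sq_bform_le_of_forall_nonneg (h : ∀ t : ℝ, 0 ≤ bform n (x + t • y) (x + t • y)) :
    bform n x y ^ 2 ≤ bform n x x * bform n y y := by
  have := discrim_le_zero fun t => (bform_add_smul_self x y t).symm ▸ h t
  rw [discrim] at this
  linarith

lemma sq_bform_le_of_forall_nonpos (h : ∀ t : ℝ, bform n (x + t • y) (x + t • y) ≤ 0) :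
    bform n x y ^ 2 ≤ bform n x x * bform n y y := by
  have := discrim_le_zero (a := -bform n y y) (b := -(2 * bform n x y)) (c := -bform n x x)
    fun t => by linarith [bform_add_smul_self x y t, h t]
  rw [discrim] at this
  linarith

end CauchySchwarz

section Signature

lemma bform_self_neg_of_coord_eq_zero {z : Fin (n + 3) → ℝ} (hz : z ≠ 0)
    (h0 : ∀ i : Fin (n + 3), (i : ℕ) < 2 → z i = 0) : bform n z z < 0 := by
  have hsum : bform n z z = -∑ i, z i ^ 2 := by
    rw [bform, ← Finset.sum_neg_distrib]
    refine Finset.sum_congr rfl fun i _ => ?_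
    by_cases hi : (i : ℕ) < 2
    · simp [hi, h0 i hi]
    · simp only [hi, if_false]; ring
  obtain ⟨i, hi⟩ := Function.ne_iff.mp hz
  rw [hsum, neg_neg_iff_pos]
  exact Finset.sum_pos' (fun j _ => sq_nonneg _) ⟨i, Finset.mem_univ _, sq_pos_of_ne_zero hi⟩

lemma exists_bform_self_neg_of_two_lt_finrank {V : Submodule ℝ (Fin (n + 3) → ℝ)}
    (hV : 2 < finrank ℝ V) : ∃ z ∈ V, bform n z z < 0 := by
  let f : V →ₗ[ℝ] Fin 2 → ℝ :=
    LinearMap.pi (fun i => LinearMap.proj (Fin.castLE (by omega) i)) ∘ₗ V.subtype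
  obtain ⟨z, hz, hz0⟩ := (Submodule.ne_bot_iff _).mp <|
    LinearMap.ker_ne_bot_of_finrank_lt (f := f) (by simpa using hV)
  refine ⟨z, z.2, bform_self_neg_of_coord_eq_zero (by simpa using hz0) fun i hi => ?_⟩
  simpa [f] using congrFun (LinearMap.mem_ker.mp hz) ⟨i, hi⟩

lemma bform_self_nonpos_of_orthogonal {E : Submodule ℝ (Fin (n + 3) → ℝ)}
    (hE2 : finrank ℝ E = 2) (hE : ∀ e ∈ E, 0 ≤ bform n e e) {w : Fin (n + 3) → ℝ}
    (hw : ∀ e ∈ E, bform n e w = 0) : bform n w w ≤ 0 := by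
  by_contra! hww
  have hwE : w ∉ E := fun h => hww.ne' (hw w h)
  obtain ⟨z, hz, hzneg⟩ := exists_bform_self_neg_of_two_lt_finrank (n := n)
    (V := E ⊔ span ℝ {w}) (by rw [finrank_sup_span_singleton hwE, hE2]; norm_num)
  obtain ⟨e, he, _, hs, rfl⟩ := mem_sup.mp hz
  obtain ⟨t, rfl⟩ := mem_span_singleton.mp hs
  rw [bform_add_smul_self, hw e he] at hzneg
  nlinarith [hE e he, mul_self_nonneg t]

end Signature

section Poincare

lemma bform_self_nonneg_of_pos {E : Submodule ℝ (Fin (n + 3) → ℝ)}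
    (hEpos : ∀ u ∈ E, u ≠ 0 → 0 < bform n u u) {u : Fin (n + 3) → ℝ} (hu : u ∈ E) :
    0 ≤ bform n u u := by
  rcases eq_or_ne u 0 with rfl | h
  · simp [bform]
  · exact (hEpos u hu h).le

lemma eq_of_add_eq_add_of_orthogonal {E : Submodule ℝ (Fin (n + 3) → ℝ)}
    (hEpos : ∀ u ∈ E, u ≠ 0 → 0 < bform n u u) {a a' b b' : Fin (n + 3) → ℝ}
    (ha : a ∈ E) (ha' : a' ∈ E) (hb : ∀ e ∈ E, bform n e b = 0)
    (hb' : ∀ e ∈ E, bform n e b' = 0) (h : a + b = a' + b') : a = a' ∧ b = b' := by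
  have hd : a - a' = b' - b := by
    rw [sub_eq_sub_iff_add_eq_add]; exact h.trans (add_comm _ _)
  have hdd : bform n (a - a') (a - a') = 0 := by
    nth_rewrite 2 [hd]
    rw [bform_sub_right, hb' _ (E.sub_mem ha ha'), hb _ (E.sub_mem ha ha'), sub_zero]
  have haa' : a = a' := by
    by_contra hne
    exact (hEpos _ (E.sub_mem ha ha') (sub_ne_zero.mpr hne)).ne' hdd
  exact ⟨haa', by rwa [haa', add_right_inj] at h⟩

lemma bform_Psi_Psi {u v u' v' : Fin (n + 3) → ℝ} (huv' : bform n u v' = 0)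
    (hvu' : bform n v u' = 0) :
    bform n (Psi n (u, v)) (Psi n (u', v')) =
      2 / (1 - bform n u u) * (2 / (1 - bform n u' u')) * bform n u u' +
        (1 + bform n u u) / (1 - bform n u u) * ((1 + bform n u' u') / (1 - bform n u' u')) *
          bform n v v' := by
  simp only [Psi, bform_add_left, bform_add_right, bform_smul_left, bform_smul_right, huv', hvu']
  ring

lemma bform_Psi_self {u v : Fin (n + 3) → ℝ} (huv : bform n u v = 0) (hv : bform n v v = -1)
    (hu : bform n u u ≠ 1) : bform n (Psi n (u, v)) (Psi n (u, v)) = -1 := by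
  rw [bform_Psi_Psi huv (by rw [bform_comm, huv]), hv]
  have : 1 - bform n u u ≠ 0 := sub_ne_zero.mpr hu.symm
  field_simp
  ring

lemma eq_of_Psi_eq_Psi {E : Submodule ℝ (Fin (n + 3) → ℝ)}
    (hEpos : ∀ u ∈ E, u ≠ 0 → 0 < bform n u u) {u v u' v' : Fin (n + 3) → ℝ}
    (hu : u ∈ E) (hu1 : bform n u u < 1) (hv : ∀ w ∈ E, bform n w v = 0) (hv1 : bform n v v = -1)
    (hu' : u' ∈ E) (hu'1 : bform n u' u' < 1) (hv' : ∀ w ∈ E, bform n w v' = 0)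
    (hv'1 : bform n v' v' = -1) (h : Psi n (u, v) = Psi n (u', v')) : (u, v) = (u', v') := by
  have hq := bform_self_nonneg_of_pos hEpos hu
  have hq' := bform_self_nonneg_of_pos hEpos hu'
  have hperp : ∀ {w} c, (∀ e ∈ E, bform n e w = 0) → ∀ e ∈ E, bform n e (c • w) = 0 :=
    fun c hw e he => by rw [bform_smul_right, hw e he, mul_zero]
  obtain ⟨hE, hEperp⟩ := eq_of_add_eq_add_of_orthogonal hEpos (E.smul_mem _ hu)
    (E.smul_mem _ hu') (hperp _ hv) (hperp _ hv') h
  set b := (1 + bform n u u) / (1 - bform n u u)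
  set b' := (1 + bform n u' u') / (1 - bform n u' u')
  have hbb' : b = b' := by
    have := congrArg (fun w => bform n w w) hEperp
    simp only [bform_smul_left, bform_smul_right, hv1, hv'1] at this
    exact (mul_self_inj (by positivity) (by positivity)).mp (by linarith)
  have hqq' : bform n u u = bform n u' u' := by
    rw [div_eq_div_iff (by linarith) (by linarith)] at hbb'
    linarith
  simp only [hqq'] at hE
  rw [hbb'] at hEperp
  rw [smul_right_injective _ (div_ne_zero two_ne_zero (by linarith)) hE,
    smul_right_injective _ (by positivity : b' ≠ 0) hEperp]

end Poincare

section Hemisphere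

noncomputable def hemiCos (n : ℕ) (u u' : Fin (n + 3) → ℝ) : ℝ :=
  (2 / (1 + bform n u u)) * (2 / (1 + bform n u' u')) * bform n u u' +
    ((1 - bform n u u) / (1 + bform n u u)) * ((1 - bform n u' u') / (1 + bform n u' u'))

lemma hemiDist_eq_arccos_hemiCos (u u' : Fin (n + 3) → ℝ) :
    hemiDist n u u' = Real.arccos (hemiCos n u u') := rfl

lemma hemiCos_mem_Icc {u u' : Fin (n + 3) → ℝ} (hq : 0 ≤ bform n u u) (hq' : 0 ≤ bform n u' u')
    (hs : bform n u u' ^ 2 ≤ bform n u u * bform n u' u') : hemiCos n u u' ∈ Icc (-1) 1 := by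
  have hpos : 0 < (1 + bform n u u) * (1 + bform n u' u') := by positivity
  have hcos : hemiCos n u u' = (4 * bform n u u' + (1 - bform n u u) * (1 - bform n u' u')) /
      ((1 + bform n u u) * (1 + bform n u' u')) := by
    rw [hemiCos]; field_simp; ring
  rw [hcos, mem_Icc, le_div_iff₀ hpos, div_le_one hpos]
  constructor <;> nlinarith [sq_nonneg (bform n u u - bform n u' u'),
    sq_nonneg (1 - bform n u u * bform n u' u'), mul_nonneg hq hq']

lemma bform_Psi_Psi_lt_neg_one_iff {u v u' v' : Fin (n + 3) → ℝ} (huv' : bform n u v' = 0)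
    (hvu' : bform n v u' = 0) (hq : 0 ≤ bform n u u) (hq1 : bform n u u < 1)
    (hq' : 0 ≤ bform n u' u') (hq'1 : bform n u' u' < 1) :
    bform n (Psi n (u, v)) (Psi n (u', v')) < -1 ↔ hemiCos n u u' < -bform n v v' := by
  have hpos : 0 < (1 + bform n u u) * (1 + bform n u' u') /
      ((1 - bform n u u) * (1 - bform n u' u')) := by
    apply div_pos <;> apply mul_pos <;> linarith
  have hkey : bform n (Psi n (u, v)) (Psi n (u', v')) + 1 =
      (1 + bform n u u) * (1 + bform n u' u') / ((1 - bform n u u) * (1 - bform n u' u')) *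
        (hemiCos n u u' + bform n v v') := by
    have : 1 - bform n u u ≠ 0 := by linarith
    have : 1 - bform n u' u' ≠ 0 := by linarith
    rw [bform_Psi_Psi huv' hvu', hemiCos]
    field_simp
    ring
  rw [lt_neg_iff_add_neg, lt_neg_iff_add_neg, hkey]
  exact ⟨fun h => neg_of_mul_neg_right h hpos.le, mul_neg_of_pos_of_neg hpos⟩

end Hemisphere

lemma joinedSpacelike_iff {x y : Fin (n + 3) → ℝ} (hx : bform n x x = -1)
    (hy : bform n y y = -1) (hxy : x ≠ y) : JoinedSpacelike n x y ↔ bform n x y < -1 := by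
  constructor
  · rintro ⟨w, -, hxw, t, rfl⟩
    have ht : t ≠ 0 := by
      rintro rfl
      simp at hxy
    rw [bform_add_right, bform_smul_right, bform_smul_right, hx, hxw]
    linarith [Real.one_lt_cosh.mpr ht]
  · intro h
    set t := Real.arcosh (-bform n x y)
    have hcosh : Real.cosh t = -bform n x y := Real.cosh_arcosh (by linarith)
    have hsinh : 0 < Real.sinh t := Real.sinh_pos_iff.mpr (Real.arcosh_pos (by linarith))
    have hsq := Real.cosh_sq t
    refine ⟨(Real.sinh t)⁻¹ • (y - Real.cosh t • x), ?_, ?_, t, ?_⟩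
    · simp only [bform_smul_left, bform_smul_right, bform_sub_left, bform_sub_right]
      rw [hx, hy, bform_comm y x, hcosh]
      field_simp
      nlinarith
    · rw [bform_smul_right, bform_sub_right, bform_smul_right, hx, hcosh]
      ring
    · rw [smul_smul, mul_inv_cancel₀ hsinh.ne', one_smul, add_sub_cancel]

end

/-- In the Poincaré model `Ψ : 𝔻² × 𝕊ⁿ → Ĥ^{2,n}` of a positive definite 2-plane `E`,
two points `x = Ψ(u,v)` and `x' = Ψ(u',v')` of `Ĥ^{2,n}` are joined by a spacelike geodesic
iff `d_{𝕊ⁿ}(v,v') < d_{𝕊²}(u,u')`. -/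
theorem stmt4 (n : ℕ) (E : Submodule ℝ (Fin (n + 3) → ℝ))
    (hE2 : Module.finrank ℝ E = 2)
    (hEpos : ∀ u ∈ E, u ≠ 0 → 0 < bform n u u)
    (u v u' v' : Fin (n + 3) → ℝ)
    (hu : u ∈ E) (hu1 : bform n u u < 1)
    (hv : ∀ w ∈ E, bform n w v = 0) (hv1 : bform n v v = -1)
    (hu' : u' ∈ E) (hu'1 : bform n u' u' < 1)
    (hv' : ∀ w ∈ E, bform n w v' = 0) (hv'1 : bform n v' v' = -1)
    (hne : (u, v) ≠ (u', v')) :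
    JoinedSpacelike n (Psi n (u, v)) (Psi n (u', v')) ↔
      sphDist n v v' < hemiDist n u u' := by
  have hE : ∀ e ∈ E, 0 ≤ bform n e e := fun e he => bform_self_nonneg_of_pos hEpos he
  have hvu' : bform n v u' = 0 := by rw [bform_comm]; exact hv u' hu'
  have hcosE : hemiCos n u u' ∈ Icc (-1) 1 := hemiCos_mem_Icc (hE u hu) (hE u' hu') <|
    sq_bform_le_of_forall_nonneg fun t => hE _ (E.add_mem hu (E.smul_mem t hu'))
  have hcosS : -bform n v v' ∈ Icc (-1) 1 := by
    have := sq_bform_le_of_forall_nonpos (x := v) (y := v') fun t =>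
      bform_self_nonpos_of_orthogonal hE2 hE fun e he => by
        rw [bform_add_right, bform_smul_right, hv e he, hv' e he, mul_zero, add_zero]
    rw [hv1, hv'1] at this
    constructor <;> nlinarith
  rw [joinedSpacelike_iff (bform_Psi_self (hv u hu) hv1 hu1.ne)
      (bform_Psi_self (hv' u' hu') hv'1 hu'1.ne)
      fun h => hne (eq_of_Psi_eq_Psi hEpos hu hu1 hv hv1 hu' hu'1 hv' hv'1 h),
    bform_Psi_Psi_lt_neg_one_iff (hv' u hu) hvu' (hE u hu) hu1 (hE u' hu') hu'1,
    sphDist, hemiDist_eq_arccos_hemiCos, Real.strictAntiOn_arccos.lt_iff_gt hcosS hcosE]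
end

section
/- Let β be a cross ratio and let P, Q be ideal triangles (plaques) in ℍ² sharing no ideal vertex, with separating boundary leaves ℓ_P and ℓ_Q coherently oriented. Let d = [ℓ_P⁺, ℓ_Q⁻] and d' = [ℓ_P⁻, ℓ_Q⁺] be the two diagonals of the strip between ℓ_P and ℓ_Q, and let σ_d^β(P,Q) (resp. σ_{d'}^β(P,Q)) denote the sum of the elementary β-shears across ℓ_P, d, ℓ_Q (resp. ℓ_P, d', ℓ_Q). Then |σ_d^β(P,Q) - σ_{d'}^β(P,Q)| = 2|log β(ℓ_P⁺, ℓ_Q⁺, ℓ_Q⁻, ℓ_P⁻)|. -/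
/-- The axioms of a cross ratio on the boundary circle `S` (Definition 2.26). -/
structure IsCrossRatio {S : Type*} (β : S → S → S → S → ℝ) : Prop where
  zero_iff : ∀ u v w z : S, u ≠ z → v ≠ w → (β u v w z = 0 ↔ u = w ∨ v = z)
  eq_one_left : ∀ u w z : S, u ≠ z → u ≠ w → β u u w z = 1
  eq_one_right : ∀ u v w : S, u ≠ w → v ≠ w → β u v w w = 1
  symm : ∀ u v w z : S, u ≠ z → v ≠ w → β u v w z = β w z u v
  cocycle : ∀ u v w z x : S, u ≠ z → v ≠ w → v ≠ x → u ≠ x →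
    β u v w z = β u v x z * β u v w x
  abs_rel : ∀ u v w z : S, u ≠ z → v ≠ w → u ≠ v → w ≠ z →
    |β u v w z| = |β u w v z * β u z w v|

/-- Change of the `β`-shear under a diagonal exchange.  Here `a = ℓ_P⁺`, `b = ℓ_P⁻` are the
(coherently oriented) endpoints of the boundary leaf `ℓ_P` of the plaque `P`, `c = ℓ_Q⁺`,
`e = ℓ_Q⁻` those of the boundary leaf `ℓ_Q` of `Q`, and `p`, `q` are the remaining ideal
vertices of `P`, `Q`; `P` and `Q` share no ideal vertex, so the six points are pairwise
distinct.  The diagonal `d = [ℓ_P⁺, ℓ_Q⁻]` cuts the strip between `ℓ_P` and `ℓ_Q` into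
two spikes `R, T`, and the sum of the elementary shears
`σ_d^β(P,Q) = σ^β(P,R) + σ^β(R,T) + σ^β(T,Q)
            = log|β(a,b,p,e)| + log|β(a,e,b,c)| + log|β(c,e,a,q)|`;
similarly for the other diagonal `d' = [ℓ_P⁻, ℓ_Q⁺]`,
`σ_{d'}^β(P,Q) = log|β(a,b,p,c)| + log|β(c,b,a,e)| + log|β(c,e,b,q)|`.
Then `|σ_d^β(P,Q) - σ_{d'}^β(P,Q)| = 2 |log β(ℓ_P⁺, ℓ_Q⁺, ℓ_Q⁻, ℓ_P⁻)|`. -/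
theorem stmt10 {S : Type*} (β : S → S → S → S → ℝ) (h : IsCrossRatio β)
    (a b c e p q : S) (hdist : List.Pairwise (· ≠ ·) [a, b, c, e, p, q]) :
    |(Real.log |β a b p e| + Real.log |β a e b c| + Real.log |β c e a q|) -
      (Real.log |β a b p c| + Real.log |β c b a e| + Real.log |β c e b q|)| =
    2 * |Real.log (β a c e b)| := by
  simp only [List.pairwise_cons, List.mem_cons, List.not_mem_nil, List.Pairwise.nil,
    List.mem_singleton, forall_eq_or_imp, forall_eq, or_false, and_true] at hdist
  obtain ⟨⟨hab, hac, hae, hap, haq⟩, ⟨hbc, hbe, hbp, hbq⟩, ⟨hce, hcp, hcq⟩, ⟨hep, heq⟩,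
    hpq, -⟩ := hdist
  have nz : ∀ u v w z : S, u ≠ z → v ≠ w → u ≠ w → v ≠ z → β u v w z ≠ 0 := by
    intro u v w z h1 h2 h3 h4
    rw [Ne, h.zero_iff u v w z h1 h2]
    tauto
  have e1 : β a b p e = β a b c e * β a b p c :=
    h.cocycle a b p e c hae hbp hbc hac
  have e2 : β c e a q = β c e b q * β c e a b :=
    h.cocycle c e a q b hcq (Ne.symm hae) (Ne.symm hbe) (Ne.symm hbc)
  have e3 : β c b a e = β a e c b := h.symm c b a e hce (Ne.symm hab)
  have e4 : (1 : ℝ) = β a e c b * β a e b c := by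
    rw [← h.eq_one_right a e b hab (Ne.symm hbe)]
    exact h.cocycle a e b b c hab (Ne.symm hbe) (Ne.symm hce) hac
  have e5 : (1 : ℝ) = β a b e c * β a b c e := by
    rw [← h.eq_one_right a b c hac hbc]
    exact h.cocycle a b c c e hac hbc hbe hae
  have e6 : |β a c e b| = |β a e c b * β a b e c| :=
    h.abs_rel a c e b hab hce hac (Ne.symm hbe)
  have e7 : β c e a b = β a b c e := h.symm c e a b (Ne.symm hbc) (Ne.symm hae)
  have nz1 : β a b c e ≠ 0 := nz a b c e hae hbc hac hbe
  have nz2 : β a e b c ≠ 0 := nz a e b c hac (Ne.symm hbe) hab (Ne.symm hce)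
  have nz3 : β a b p c ≠ 0 := nz a b p c hac hbp hap hbc
  have nz4 : β c e b q ≠ 0 := nz c e b q hcq (Ne.symm hbe) (Ne.symm hbc) heq
  have i1 : β a e c b = (β a e b c)⁻¹ := eq_inv_of_mul_eq_one_left e4.symm
  have i2 : β a b e c = (β a b c e)⁻¹ := eq_inv_of_mul_eq_one_left e5.symm
  set L1 := Real.log |β a b c e| with hL1
  set L2 := Real.log |β a e b c| with hL2
  have r1 : Real.log |β a b p e| = L1 + Real.log |β a b p c| := by
    rw [e1, abs_mul, Real.log_mul (abs_ne_zero.2 nz1) (abs_ne_zero.2 nz3)]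
  have r2 : Real.log |β c e a q| = Real.log |β c e b q| + L1 := by
    rw [e2, e7, abs_mul, Real.log_mul (abs_ne_zero.2 nz4) (abs_ne_zero.2 nz1)]
  have r3 : Real.log |β c b a e| = -L2 := by
    rw [e3, i1, abs_inv, Real.log_inv]
  have r4 : Real.log (β a c e b) = -L2 + -L1 := by
    rw [← Real.log_abs, e6, i1, i2, abs_mul, abs_inv, abs_inv,
      Real.log_mul (inv_ne_zero (abs_ne_zero.2 nz2)) (inv_ne_zero (abs_ne_zero.2 nz1)),
      Real.log_inv, Real.log_inv]
  rw [r1, r2, r3, r4]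
  have : |(-L2 + -L1)| = |L1 + L2| := by rw [← abs_neg]; ring_nf
  rw [this]
  have : L1 + Real.log |β a b p c| + L2 + (Real.log |β c e b q| + L1) -
      (Real.log |β a b p c| + -L2 + Real.log |β c e b q|) = 2 * (L1 + L2) := by ring
  rw [this, abs_mul, abs_two]
end

section
/- Let β be a cross ratio on ∂Γ, γ a nontrivial element of Γ with attracting and repelling fixed points γ⁺, γ⁻ ∈ ∂Γ, and P an ideal triangle with vertices x, y, γ^± (in counterclockwise order x, y, γ^±) lying to the left of the axis of γ. Then the shear σ^β(P, γP) = log|β(γ^±, x, y, γy) β(γ^±, γy, x, γx)| equals ±L_β(γ), where L_β(γ) = log|β(γ⁺, γ⁻, x, γx)| is the β-period of γ; the sign is + if the vertex of P on the axis is γ⁺, and − if it is γ⁻. -/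
/-- Let `β` be a `Γ`-invariant cross ratio on `∂Γ`, `γ ∈ Γ` a nontrivial element with
attracting/repelling fixed points `γ⁺ = gp`, `γ⁻ = gm`, and let `P` be an ideal triangle
with vertices `x, y, γ^±` lying on one side of the axis of `γ`.  The shear
`σ^β(P, γP) = log|β(γ^±, x, y, γy) β(γ^±, γy, x, γx)|` equals `± L_β(γ)`, where
`L_β(γ) = log|β(γ⁺, γ⁻, x, γx)|` is the `β`-period of `γ`: the sign is `+` if the vertex
of `P` on the axis is `γ⁺`, and `−` if it is `γ⁻`. -/
theorem stmt11 {G S : Type*} [Group G] [MulAction G S]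
    (β : S → S → S → S → ℝ) (h : IsCrossRatio β)
    (hinv : ∀ (g : G) (u v w z : S), β (g • u) (g • v) (g • w) (g • z) = β u v w z)
    (γ : G) (gp gm x y : S)
    (hfp : γ • gp = gp) (hfm : γ • gm = gm)
    (hdist : List.Pairwise (· ≠ ·) [gp, gm, x, y, γ • x, γ • y]) :
    Real.log |β gp x y (γ • y) * β gp (γ • y) x (γ • x)| =
        Real.log |β gp gm x (γ • x)| ∧
    Real.log |β gm x y (γ • y) * β gm (γ • y) x (γ • x)| =
        -Real.log |β gp gm x (γ • x)| := by
  simp only [List.pairwise_cons, List.mem_cons, List.not_mem_nil, List.mem_singleton,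
    forall_eq_or_imp, forall_eq, List.Pairwise.nil, and_true, IsEmpty.forall_iff,
    List.not_mem_nil, or_false, false_or] at hdist
  obtain ⟨⟨hpm, hpx, hpy, hpX, hpY⟩, ⟨hmx, hmy, hmX, hmY⟩, ⟨hxy, hxX, hxY⟩,
    ⟨hyX, hyY⟩, hXY, _⟩ := hdist
  have hne : ∀ u v w z : S, u ≠ z → v ≠ w → u ≠ w → v ≠ z → β u v w z ≠ 0 :=
    fun u v w z huz hvw huw hvz h0 =>
      ((h.zero_iff u v w z huz hvw).1 h0).elim (fun e => huw e) (fun e => hvz e)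
  have fsymm : ∀ u v w z : S, u ≠ z → v ≠ w →
      Real.log |β u v w z| = Real.log |β w z u v| := by
    intro u v w z huz hvw; rw [h.symm u v w z huz hvw]
  have frev : ∀ u v w z : S, u ≠ w → u ≠ z → v ≠ w → v ≠ z →
      Real.log |β u v w z| = - Real.log |β u v z w| := by
    intro u v w z huw huz hvw hvz
    have e : β u v z w * β u v w z = 1 :=
      (h.cocycle u v w w z huw hvw hvz huz).symm.trans (h.eq_one_right u v w huw hvw)
    have n1 : β u v z w ≠ 0 := hne u v z w huw hvz huz hvw
    have n2 : β u v w z ≠ 0 := hne u v w z huz hvw huw hvz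
    have hl := Real.log_mul (abs_ne_zero.mpr n1) (abs_ne_zero.mpr n2)
    rw [← abs_mul, e, abs_one, Real.log_one] at hl
    linarith
  have fabs : ∀ u v w z : S, u ≠ v → u ≠ w → u ≠ z → v ≠ w → v ≠ z → w ≠ z →
      Real.log |β u v w z| = Real.log |β u w v z| + Real.log |β u z w v| := by
    intro u v w z huv huw huz hvw hvz hwz
    have n1 : β u w v z ≠ 0 := hne u w v z huz hvw.symm huv hwz
    have n2 : β u z w v ≠ 0 := hne u z w v huv hwz.symm huw hvz.symm
    rw [h.abs_rel u v w z huz hvw huv hwz, abs_mul,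
      Real.log_mul (abs_ne_zero.mpr n1) (abs_ne_zero.mpr n2)]
  have fcoc : ∀ u v w z a : S, u ≠ z → v ≠ w → v ≠ a → u ≠ a → u ≠ w → v ≠ z →
      Real.log |β u v w z| = Real.log |β u v a z| + Real.log |β u v w a| := by
    intro u v w z a huz hvw hva hua huw hvz
    have n1 : β u v a z ≠ 0 := hne u v a z huz hva hua hvz
    have n2 : β u v w a ≠ 0 := hne u v w a hua hvw huw hva
    rw [h.cocycle u v w z a huz hvw hva hua, abs_mul,
      Real.log_mul (abs_ne_zero.mpr n1) (abs_ne_zero.mpr n2)]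
  have finv : ∀ u v w z : S,
      Real.log |β (γ • u) (γ • v) (γ • w) (γ • z)| = Real.log |β u v w z| := by
    intro u v w z; rw [hinv]
  constructor
  · have n1 : β gp x y (γ • y) ≠ 0 := hne _ _ _ _ hpY hxy hpy hxY
    have n2 : β gp (γ • y) x (γ • x) ≠ 0 := hne _ _ _ _ hpX hxY.symm hpx hXY.symm
    rw [abs_mul, Real.log_mul (abs_ne_zero.mpr n1) (abs_ne_zero.mpr n2)]
    have i1 : Real.log |β gp (γ • x) gm (γ • y)| = Real.log |β gp x gm y| := by
      have := finv gp x gm y; rwa [hfp, hfm] at this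
    linarith [frev gp gm x (γ • x) hpx hpX hmx hmX,
      fabs gp gm (γ • x) x hpm hpX hpx hmX hmx hxX.symm,
      frev gp x gm (γ • x) hpm hpX hmx.symm hxX,
      frev gp x y (γ • y) hpy hpY hxy hxY,
      fabs gp x (γ • y) (γ • x) hpx hpY hpX hxY hxX hXY.symm,
      fcoc gp x gm y (γ • y) hpy hmx.symm hxY hpY hpm hxy,
      fcoc gp x gm (γ • x) (γ • y) hpX hmx.symm hxY hpY hpm hxX,
      fcoc gp (γ • x) gm x (γ • y) hpx hmX.symm hXY hpY hpm hxX.symm,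
      i1]
  · have n1 : β gm x y (γ • y) ≠ 0 := hne _ _ _ _ hmY hxy hmy hxY
    have n2 : β gm (γ • y) x (γ • x) ≠ 0 := hne _ _ _ _ hmX hxY.symm hmx hXY.symm
    rw [abs_mul, Real.log_mul (abs_ne_zero.mpr n1) (abs_ne_zero.mpr n2)]
    have i1 : Real.log |β gp gm (γ • x) (γ • y)| = Real.log |β gp gm x y| := by
      have := finv gp gm x y; rwa [hfp, hfm] at this
    have i2 : Real.log |β gp (γ • x) gm (γ • y)| = Real.log |β gp x gm y| := by
      have := finv gp x gm y; rwa [hfp, hfm] at this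
    linarith [frev gp gm x y hpx hpy hmx hmy,
      frev gp gm x (γ • x) hpx hpX hmx hmX,
      fabs gp gm y x hpm hpy hpx hmy hmx hxy.symm,
      fabs gp gm (γ • x) x hpm hpX hpx hmX hmx hxX.symm,
      frev gp gm (γ • x) (γ • y) hpX hpY hmX hmY,
      fabs gp gm (γ • y) (γ • x) hpm hpY hpX hmY hmX hXY.symm,
      frev gp x gm y hpm hpy hmx.symm hxy,
      fsymm gp x gm (γ • x) hpX hmx.symm,
      frev gp x gm (γ • x) hpm hpX hmx.symm hxX,
      fsymm gp y gm x hpx hmy.symm,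
      fsymm gp (γ • x) gm x hpx hmX.symm,
      frev gp (γ • x) gm (γ • y) hpm hpY hmX.symm hXY,
      fsymm gp (γ • y) gm (γ • x) hpX hmY.symm,
      frev gm x y (γ • y) hmy hmY hxy hxY,
      fabs gm x (γ • y) (γ • x) hmx hmY hmX hxY hxX hXY.symm,
      fcoc gm x gp y (γ • y) hmy hpx.symm hxY hmY hpm.symm hxy,
      fcoc gm x gp (γ • x) (γ • y) hmX hpx.symm hxY hmY hpm.symm hxX,
      fcoc gm (γ • x) gp x (γ • y) hmx hpX.symm hXY hmY hpm.symm hxX.symm,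
      i1,
      i2]
end
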